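/- arXiv:2109.11805 — 2 statements merged into one kernel-verified Lean document; each statement's English description precedes it below -/
import Mathlib

section
/- With notation as above, the natural k[t, β]-algebra homomorphism k[t, β_1,...,β_n] → k[t, α, β]/F(t·x+y)^⊥ is surjective with kernel equal to F(y)^⊥·k[t, β]; hence k[t, α, β]/F(t·x+y)^⊥ ≅ k[t, β]/F(y)^⊥ as k[t, β]-algebras. -/
/-!
Since `∂/∂x_i F(t·x+y) = t · ∂/∂y_i F(t·x+y)`, every `α_i - t·β_i` annihilates
`F(t·x+y)`, so modulo the annihilator each `α_i` may be replaced by `t·β_i`: the map from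
`k[t,β]` is onto. An element `∑ t^e h_e(β)` of `k[t,β]` sends `F(t·x+y)` to
`∑ t^e (h_e ∘ F)(t·x+y)`; setting `x = 0` shows that this vanishes iff every `h_e ∘ F` does,
i.e. iff every `h_e ∈ F^⊥`.
-/

open MvPolynomial

/-- Composition of powers of the operators `op i`, with multiplicities given by `m`. -/
noncomputable def opPow {k : Type*} [CommSemiring k] {σ : Type*}
    (op : σ → Module.End k (MvPolynomial σ k)) (m : σ →₀ ℕ) :
    Module.End k (MvPolynomial σ k) :=
  m.support.toList.foldr (fun i L => (op i) ^ (m i) * L) 1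

/-- The action of a "differential polynomial" `h` on `F`, each variable of `h` acting by the
operator `op i`. -/
noncomputable def apAct {k : Type*} [CommSemiring k] {σ : Type*}
    (op : σ → Module.End k (MvPolynomial σ k)) (h F : MvPolynomial σ k) : MvPolynomial σ k :=
  h.support.sum fun m => (h.coeff m) • (opPow op m F)

/-- Apolarity contraction `h ∘ F`: each variable of `h` acts as the corresponding partial
derivative. -/
noncomputable def apContract {k : Type*} [CommSemiring k] {σ : Type*} [DecidableEq σ]
    (h F : MvPolynomial σ k) : MvPolynomial σ k :=
  apAct (fun i => (pderiv i).toLinearMap) h F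

/-- The operators for the relative apolarity action on `k[t, z…]` (with `t = X none`):
`t` acts by multiplication and every other variable acts as its partial derivative. -/
noncomputable def tOp {k : Type*} [CommSemiring k] {τ : Type*} [DecidableEq τ] :
    Option τ → Module.End k (MvPolynomial (Option τ) k)
  | none => LinearMap.mulLeft k (X none)
  | some v => (pderiv (some v)).toLinearMap

/-- Relative apolarity action of `k[t, α…]` on `k[t, x…]`: `t` acts by multiplication, and the
variable `some v` acts as `∂/∂(X (some v))`. -/
noncomputable def tAct {k : Type*} [CommSemiring k] {τ : Type*} [DecidableEq τ]
    (h F : MvPolynomial (Option τ) k) : MvPolynomial (Option τ) k :=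
  apAct tOp h F

section ApAct

variable {k σ : Type*} [CommSemiring k] (op : σ → Module.End k (MvPolynomial σ k))

theorem opPow_eq_prod (m : σ →₀ ℕ) :
    opPow op m = (m.support.toList.map fun i => op i ^ m i).prod := by
  rw [opPow, List.prod_eq_foldr, List.foldr_map]

theorem isMulCommutative_adjoin_range (hop : ∀ i j, Commute (op i) (op j)) :
    IsMulCommutative (Algebra.adjoin k (Set.range op)) :=
  Algebra.isMulCommutative_adjoin k (by rintro _ ⟨i, rfl⟩ _ ⟨j, rfl⟩; exact hop i j)

open scoped IsMulCommutative

-- `aeval` needs a commutative target, hence the detour through the subalgebra generated by the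
-- `op i`.
noncomputable def apActHom (hop : ∀ i j, Commute (op i) (op j)) :
    MvPolynomial σ k →ₐ[k] Module.End k (MvPolynomial σ k) :=
  haveI := isMulCommutative_adjoin_range op hop
  (Algebra.adjoin k (Set.range op)).val.comp
    (aeval fun i => ⟨op i, Algebra.subset_adjoin ⟨i, rfl⟩⟩)

theorem apActHom_X (hop : ∀ i j, Commute (op i) (op j)) (i : σ) :
    apActHom op hop (X i) = op i := by
  simp [apActHom]

theorem apAct_eq_apActHom (hop : ∀ i j, Commute (op i) (op j)) (h F : MvPolynomial σ k) :
    apAct op h F = apActHom op hop h F := by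
  have := isMulCommutative_adjoin_range op hop
  simp only [apAct, apActHom, AlgHom.comp_apply, aeval_def, eval₂_eq, map_sum, map_mul,
    LinearMap.sum_apply, opPow_eq_prod]
  refine Finset.sum_congr rfl fun m _ => ?_
  rw [← Finset.prod_map_toList, map_list_prod, List.map_map]
  simp [Algebra.smul_def, Function.comp_def]

noncomputable def apAnnihilator (hop : ∀ i j, Commute (op i) (op j)) (F : MvPolynomial σ k) :
    Ideal (MvPolynomial σ k) where
  carrier := {h | apAct op h F = 0}
  add_mem' := by simp_all [apAct_eq_apActHom op hop]
  zero_mem' := by simp [apAct_eq_apActHom op hop]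
  smul_mem' g h := by simp_all [apAct_eq_apActHom op hop]

theorem mem_apAnnihilator {hop : ∀ i j, Commute (op i) (op j)} {F h : MvPolynomial σ k} :
    h ∈ apAnnihilator op hop F ↔ apAct op h F = 0 := Iff.rfl

theorem span_setOf_apAct_eq_zero (hop : ∀ i j, Commute (op i) (op j)) (F : MvPolynomial σ k) :
    Ideal.span {h | apAct op h F = 0} = apAnnihilator op hop F :=
  Ideal.span_eq (apAnnihilator op hop F)

end ApAct

section Operators

variable {k : Type*} [CommRing k]

theorem pderiv_commute {σ : Type*} [DecidableEq σ] (i j : σ) :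
    Commute ((pderiv i).toLinearMap : Module.End k (MvPolynomial σ k)) (pderiv j).toLinearMap := by
  rw [commute_iff_lie_eq, ← Derivation.commutator_coe_linear_map]
  suffices ⁅pderiv i, pderiv j⁆ = (0 : Derivation k (MvPolynomial σ k) (MvPolynomial σ k)) by
    rw [this]; rfl
  refine derivation_ext fun l => ?_
  simp [Derivation.commutator_apply, pderiv_X, Pi.single_apply, apply_ite]

theorem tOp_commute {τ : Type*} [DecidableEq τ] (i j : Option τ) :
    Commute (tOp (k := k) i) (tOp j) := by
  have t_commute : ∀ v : τ, Commute (tOp (k := k) none) (tOp (some v)) := fun v =>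
    LinearMap.ext fun p => by simp [tOp]
  rcases i with _ | v <;> rcases j with _ | w
  · exact .refl _
  · exact t_commute w
  · exact (t_commute v).symm
  · exact pderiv_commute _ _

theorem tAct_eq_apActHom {τ : Type*} [DecidableEq τ] (h F : MvPolynomial (Option τ) k) :
    tAct h F = apActHom tOp tOp_commute h F :=
  apAct_eq_apActHom _ _ h F

theorem apContract_eq_apActHom {σ : Type*} [DecidableEq σ] (h F : MvPolynomial σ k) :
    apContract h F = apActHom (fun i => (pderiv i).toLinearMap) pderiv_commute h F :=
  apAct_eq_apActHom _ _ h F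

theorem tAct_X_none_pow_mul {τ : Type*} [DecidableEq τ] (e : ℕ)
    (h F : MvPolynomial (Option τ) k) :
    tAct (X none ^ e * h) F = X none ^ e * tAct h F := by
  simp only [tAct_eq_apActHom, map_mul, map_pow, apActHom_X, Module.End.mul_apply, tOp,
    LinearMap.pow_mulLeft, LinearMap.mulLeft_apply]

end Operators

theorem eq_sum_rename_some_mul_X_none_pow {R σ : Type*} [CommSemiring R]
    (s : MvPolynomial (Option σ) R) :
    s = (optionEquivLeft R σ s).sum fun e c => rename some c * X none ^ e := by
  conv_lhs => rw [← (optionEquivLeft R σ).symm_apply_apply s]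
  exact Polynomial.eval₂_eq_sum

theorem surjective_mkₐ_comp_rename_inr {R ι : Type*} [CommRing R]
    (J : Ideal (MvPolynomial (Option (ι ⊕ ι)) R))
    (hJ : ∀ i, X (some (.inl i)) - X none * X (some (.inr i)) ∈ J) :
    Function.Surjective ((Ideal.Quotient.mkₐ R J).comp (rename (Option.map Sum.inr))) := by
  let π : MvPolynomial (Option (ι ⊕ ι)) R →ₐ[R] MvPolynomial (Option ι) R :=
    aeval fun v => v.elim (X none) (Sum.elim (fun i => X none * X (some i)) fun i => X (some i))
  have mk_comp_π : ((Ideal.Quotient.mkₐ R J).comp (rename (Option.map Sum.inr))).comp π =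
      Ideal.Quotient.mkₐ R J := by
    refine algHom_ext fun v => ?_
    rcases v with _ | i | i
    · simp [π]
    · simpa [π] using (Ideal.Quotient.eq.mpr (hJ i)).symm
    · simp [π]
  intro q
  obtain ⟨b, rfl⟩ := Ideal.Quotient.mkₐ_surjective R J q
  exact ⟨π b, congr($mk_comp_π b)⟩

section Shift

variable {k ι : Type*} [CommRing k]

noncomputable def shiftSubst : MvPolynomial ι k →ₐ[k] MvPolynomial (Option (ι ⊕ ι)) k :=
  aeval fun i => X none * X (some (.inl i)) + X (some (.inr i))

theorem shiftSubst_X (i : ι) :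
    shiftSubst (X i : MvPolynomial ι k) = X none * X (some (.inl i)) + X (some (.inr i)) :=
  aeval_X _ _

theorem eq_zero_of_sum_shiftSubst_mul_X_none_pow_eq_zero {S : Finset ℕ}
    {c : ℕ → MvPolynomial ι k} (hc : ∑ e ∈ S, shiftSubst (c e) * X none ^ e = 0) {e : ℕ}
    (he : e ∈ S) : c e = 0 := by
  -- Setting `x = 0` turns `shiftSubst` into `p ↦ p(y)`, after which `t` is a free variable.
  let ev : MvPolynomial (Option (ι ⊕ ι)) k →ₐ[k] Polynomial (MvPolynomial ι k) :=
    aeval fun v => v.elim Polynomial.X (Sum.elim 0 fun i => Polynomial.C (X i))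
  have ev_shiftSubst (p : MvPolynomial ι k) : ev (shiftSubst p) = Polynomial.C p := by
    rw [← AlgHom.comp_apply, ← Polynomial.CAlgHom_apply (R := k)]
    congr 1
    exact algHom_ext fun i => by simp [ev, shiftSubst_X]
  have := congr(Polynomial.coeff (ev $hc) e)
  simpa [ev_shiftSubst, ev, Polynomial.finsetSum_coeff, Polynomial.coeff_C_mul_X_pow, he]
    using this

variable [DecidableEq ι]

theorem pderiv_inl_shiftSubst (i : ι) (p : MvPolynomial ι k) :
    pderiv (some (.inl i)) (shiftSubst p) = X none * shiftSubst (pderiv i p) := by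
  induction p using MvPolynomial.induction_on with
  | C a => simp [shiftSubst]
  | add p q hp hq => simp only [map_add, hp, hq, mul_add]
  | mul_X p j ih =>
    rcases eq_or_ne j i with rfl | hji
    · simp [ih, shiftSubst_X]
      ring
    · simp [ih, shiftSubst_X, pderiv_X, hji]
      ring

theorem pderiv_inr_shiftSubst (i : ι) (p : MvPolynomial ι k) :
    pderiv (some (.inr i)) (shiftSubst p) = shiftSubst (pderiv i p) := by
  induction p using MvPolynomial.induction_on with
  | C a => simp [shiftSubst]
  | add p q hp hq => simp only [map_add, hp, hq]
  | mul_X p j ih =>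
    rcases eq_or_ne j i with rfl | hji
    · simp [ih, shiftSubst_X]
    · simp [ih, shiftSubst_X, pderiv_X, hji]

theorem X_inl_sub_mem_apAnnihilator_shiftSubst (F : MvPolynomial ι k) (i : ι) :
    X (some (.inl i)) - X none * X (some (.inr i)) ∈
      apAnnihilator tOp tOp_commute (shiftSubst F) := by
  rw [mem_apAnnihilator, apAct_eq_apActHom _ tOp_commute, map_sub, map_mul, apActHom_X,
    apActHom_X, apActHom_X]
  simp [tOp, pderiv_inl_shiftSubst, pderiv_inr_shiftSubst]

theorem tAct_rename_inr_shiftSubst (h p : MvPolynomial ι k) :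
    tAct (rename (some ∘ .inr) h) (shiftSubst p) = shiftSubst (apContract h p) := by
  rw [tAct_eq_apActHom, apContract_eq_apActHom]
  induction h using MvPolynomial.induction_on generalizing p with
  | C a => simp [Algebra.algebraMap_eq_smul_one]
  | add f g hf hg => simp only [map_add, LinearMap.add_apply, hf, hg]
  | mul_X f i ih =>
    simp only [map_mul, rename_X, apActHom_X, Module.End.mul_apply, Function.comp_apply, tOp]
    simp [pderiv_inr_shiftSubst, ih]

theorem tAct_rename_shiftSubst (s : MvPolynomial (Option ι) k) (F : MvPolynomial ι k) :
    tAct (rename (Option.map Sum.inr) s) (shiftSubst F) =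
      (optionEquivLeft k ι s).sum fun e c => shiftSubst (apContract c F) * X none ^ e := by
  conv_lhs => rw [eq_sum_rename_some_mul_X_none_pow s]
  simp only [Polynomial.sum, map_sum, tAct_eq_apActHom, LinearMap.sum_apply]
  refine Finset.sum_congr rfl fun e _ => ?_
  rw [← tAct_eq_apActHom, map_mul, map_pow, rename_rename, rename_X, mul_comm,
    mul_comm _ (X _ ^ _), Option.map_none, tAct_X_none_pow_mul]
  exact congrArg _ (tAct_rename_inr_shiftSubst _ F)

theorem comap_rename_apAnnihilator_shiftSubst (F : MvPolynomial ι k) :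
    (apAnnihilator tOp tOp_commute (shiftSubst F)).comap (rename (Option.map Sum.inr)) =
      (apAnnihilator (fun i => (pderiv i).toLinearMap) pderiv_commute F).map (rename some) := by
  refine le_antisymm (fun s hs => ?_) (Ideal.map_le_iff_le_comap.mpr fun h hh => ?_)
  · replace hs : tAct (rename (Option.map Sum.inr) s) (shiftSubst F) = 0 := hs
    rw [tAct_rename_shiftSubst, Polynomial.sum] at hs
    rw [eq_sum_rename_some_mul_X_none_pow s, Polynomial.sum]
    exact Ideal.sum_mem _ fun e he => Ideal.mul_mem_right _ _
      (Ideal.mem_map_of_mem _ (eq_zero_of_sum_shiftSubst_mul_X_none_pow_eq_zero hs he))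
  · change tAct (rename (Option.map Sum.inr) (rename some h)) (shiftSubst F) = 0
    rw [rename_rename]
    exact (tAct_rename_inr_shiftSubst h F).trans (by rw [show apContract h F = 0 from hh, map_zero])

theorem ker_mkₐ_comp_rename_inr (F : MvPolynomial ι k) :
    RingHom.ker ((Ideal.Quotient.mkₐ k (apAnnihilator tOp tOp_commute (shiftSubst F))).comp
        (rename (Option.map Sum.inr))).toRingHom =
      (apAnnihilator (fun i => (pderiv i).toLinearMap) pderiv_commute F).map (rename some) := by
  rw [← comap_rename_apAnnihilator_shiftSubst]
  ext s
  exact Ideal.Quotient.eq_zero_iff_mem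

end Shift

/-- Here `k[t,α,β] = k[t,x,y] = MvPolynomial (Option (Fin n ⊕ Fin n)) k` with `t = X none`,
`α_i = x_i = X (some (Sum.inl i))`, `β_i = y_i = X (some (Sum.inr i))`;
`k[t,β] = MvPolynomial (Option (Fin n)) k` with `t = X none`, `β_i = X (some i)`; and the
annihilators are taken for the relative apolarity action (`t` acts by multiplication, the
other variables by partial differentiation). -/
theorem quotient_by_perp_shifted_general {k : Type*} [Field k] {n : ℕ}
    (F : MvPolynomial (Fin n) k) :
    letI B := MvPolynomial (Option (Fin n ⊕ Fin n)) k
    letI Small := MvPolynomial (Option (Fin n)) k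
    letI G : B := aeval (fun i : Fin n =>
      (X none * X (some (Sum.inl i)) + X (some (Sum.inr i)) : B)) F
    letI J : Ideal B := Ideal.span {h : B | tAct h G = 0}
    letI ψ : Small →ₐ[k] B ⧸ J := (Ideal.Quotient.mkₐ k J).comp
      (aeval fun v : Option (Fin n) =>
        (v.elim (X none) fun i => X (some (Sum.inr i)) : B))
    letI K : Ideal Small := Ideal.span
      ((aeval fun i : Fin n => (X (some i) : Small)) ''
        {h : MvPolynomial (Fin n) k | apContract h F = 0})
    Function.Surjective ψ ∧ RingHom.ker ψ.toRingHom = K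
      ∧ Nonempty ((Small ⧸ K) ≃ₐ[k] (B ⧸ J)) := by
  have hJ : Ideal.span {h | tAct h (shiftSubst F) = 0} =
      apAnnihilator tOp tOp_commute (shiftSubst F) :=
    span_setOf_apAct_eq_zero _ _ _
  have hincl : aeval (fun v : Option (Fin n) => (v.elim (X none) fun i => X (some (Sum.inr i)) :
      MvPolynomial (Option (Fin n ⊕ Fin n)) k)) = rename (Option.map Sum.inr) :=
    algHom_ext fun v => by cases v <;> simp
  have hK : Ideal.span ((aeval fun i : Fin n => (X (some i) : MvPolynomial (Option (Fin n)) k)) ''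
      {h | apContract h F = 0}) =
      (apAnnihilator (fun i => (pderiv i).toLinearMap) pderiv_commute F).map (rename some) := by
    rw [Ideal.map, show aeval _ = rename some from algHom_ext fun i => by simp]
    rfl
  rw [show aeval _ F = shiftSubst F from rfl, hJ, hincl, hK]
  have hsurj := surjective_mkₐ_comp_rename_inr _ (X_inl_sub_mem_apAnnihilator_shiftSubst F)
  have hker := ker_mkₐ_comp_rename_inr F
  exact ⟨hsurj, hker, ⟨(Ideal.quotientEquivAlgOfEq k hker.symm).trans
    (Ideal.quotientKerAlgEquivOfSurjective hsurj)⟩⟩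

/-- The natural map `k[t,β] → k[t,α,β]/F(t·x+y)^⊥` is surjective, its kernel is the ideal
generated by `F(y)^⊥`, and hence `k[t,α,β]/F(t·x+y)^⊥ ≅ k[t,β]/F(y)^⊥`. Here
`k[t,α,β] = k[t,x,y] = MvPolynomial (Option (Fin n ⊕ Fin n)) k` with `t = X none`,
`α_i = x_i = X (some (Sum.inl i))`, `β_i = y_i = X (some (Sum.inr i))`;
`k[t,β] = MvPolynomial (Option (Fin n)) k` with `t = X none`, `β_i = X (some i)`; and the
annihilators are taken for the relative apolarity action (`t` acts by multiplication, the
other variables by partial differentiation). -/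
theorem quotient_by_perp_shifted {k : Type*} [Field k] [CharZero k] {n : ℕ}
    (F : MvPolynomial (Fin n) k) (hF : F.IsHomogeneous 3) :
    letI B := MvPolynomial (Option (Fin n ⊕ Fin n)) k
    letI Small := MvPolynomial (Option (Fin n)) k
    letI G : B := aeval (fun i : Fin n =>
      (X none * X (some (Sum.inl i)) + X (some (Sum.inr i)) : B)) F
    letI J : Ideal B := Ideal.span {h : B | tAct h G = 0}
    letI ψ : Small →ₐ[k] B ⧸ J := (Ideal.Quotient.mkₐ k J).comp
      (aeval fun v : Option (Fin n) =>
        (v.elim (X none) fun i => X (some (Sum.inr i)) : B))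
    letI K : Ideal Small := Ideal.span
      ((aeval fun i : Fin n => (X (some i) : Small)) ''
        {h : MvPolynomial (Fin n) k | apContract h F = 0})
    Function.Surjective ψ ∧ RingHom.ker ψ.toRingHom = K
      ∧ Nonempty ((Small ⧸ K) ≃ₐ[k] (B ⧸ J)) :=
  quotient_by_perp_shifted_general F
end

section
/- The k[t]-algebra k[t, α, β]/F(t·x+y)^⊥ is a free k[t]-module, being isomorphic to k[t] ⊗_k (k[β]/F(y)^⊥). -/
/-
The substitution `y ↦ t • x + y` identifies `F(t • x + y)` with `F(y)`, and on its image `αᵢ`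
acts as `t • βᵢ` does. So `h` annihilates `F(t • x + y)` iff its image in `k[t, β]` under
`αᵢ ↦ t • βᵢ` annihilates `F(y)`, i.e. iff every `t`-coefficient of that image lies in `F(y)^⊥`.
The annihilator is therefore the kernel of a surjection
`k[t, α, β] → (k[β] ⧸ F(y)^⊥)[t] ≃ k[t] ⊗ₖ (k[β] ⧸ F(y)^⊥)` sending `t` to `t`.
-/

open MvPolynomial

open TensorProduct

section OpAlgHom

variable {R : Type*} [CommSemiring R] {σ : Type*} {M : Type*} [AddCommMonoid M] [Module R M]

open scoped IsMulCommutative in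
/-- `aeval` needs a commutative target, so we evaluate in the subalgebra generated by the
commuting operators. -/
noncomputable def opAlgHom (op : σ → Module.End R M) (hc : ∀ i j, Commute (op i) (op j)) :
    MvPolynomial σ R →ₐ[R] Module.End R M :=
  haveI := Algebra.isMulCommutative_adjoin R (s := Set.range op)
    (by rintro _ ⟨i, rfl⟩ _ ⟨j, rfl⟩; exact hc i j)
  (Algebra.adjoin R (Set.range op)).val.comp
    (aeval fun i => ⟨op i, Algebra.subset_adjoin ⟨i, rfl⟩⟩)

@[simp]
theorem opAlgHom_X (op : σ → Module.End R M) (hc : ∀ i j, Commute (op i) (op j)) (i : σ) :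
    opAlgHom op hc (X i) = op i := by
  simp [opAlgHom]

open scoped IsMulCommutative in
theorem opAlgHom_monomial (op : σ → Module.End R M) (hc : ∀ i j, Commute (op i) (op j))
    (m : σ →₀ ℕ) (c : R) :
    opAlgHom op hc (monomial m c) = c • m.support.toList.foldr (fun i L => op i ^ m i * L) 1 := by
  have := Algebra.isMulCommutative_adjoin R (s := Set.range op)
    (by rintro _ ⟨i, rfl⟩ _ ⟨j, rfl⟩; exact hc i j)
  simp only [opAlgHom, AlgHom.comp_apply, aeval_monomial, Finsupp.prod, map_mul,
    AlgHom.commutes, Algebra.smul_def, ← Finset.prod_map_toList, map_list_prod]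
  simp [List.prod_eq_foldr, List.foldr_map]

theorem apAct_eq_opAlgHom (op : σ → Module.End R (MvPolynomial σ R))
    (hc : ∀ i j, Commute (op i) (op j)) (h F : MvPolynomial σ R) :
    apAct op h F = opAlgHom op hc h F := by
  conv_rhs => rw [h.as_sum, map_sum, LinearMap.sum_apply]
  simp only [opAlgHom_monomial, LinearMap.smul_apply]
  rfl

variable {N : Type*} [AddCommMonoid N] [Module R N]

theorem algHom_comp_eq_comp_algHom_of_X {φ : MvPolynomial σ R →ₐ[R] Module.End R N}
    {ψ : MvPolynomial σ R →ₐ[R] Module.End R M} {f : M →ₗ[R] N}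
    (hX : ∀ i, φ (X i) ∘ₗ f = f ∘ₗ ψ (X i)) (h : MvPolynomial σ R) :
    φ h ∘ₗ f = f ∘ₗ ψ h := by
  induction h using MvPolynomial.induction_on with
  | C a => ext; simp [← algebraMap_eq]
  | add p q hp hq => simp only [map_add, LinearMap.add_comp, LinearMap.comp_add, hp, hq]
  | mul_X p i hp =>
    rw [map_mul, map_mul, Module.End.mul_eq_comp, Module.End.mul_eq_comp, LinearMap.comp_assoc,
      hX, ← LinearMap.comp_assoc, hp, LinearMap.comp_assoc]

theorem mem_span_setOf_apply_eq_zero {A : Type*} [CommSemiring A] [Algebra R A]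
    (φ : A →ₐ[R] Module.End R M) (z : M) (a : A) :
    a ∈ Ideal.span {b | φ b z = 0} ↔ φ a z = 0 := by
  refine ⟨fun ha => ?_, fun ha => Ideal.subset_span ha⟩
  induction ha using Submodule.span_induction with
  | mem b hb => exact hb
  | zero => simp
  | add b c _ _ hb hc => simp [hb, hc]
  | smul r b _ hb => simp [hb]

end OpAlgHom

section Derivations

variable {R : Type*} [CommRing R] {σ : Type*} [DecidableEq σ]

theorem MvPolynomial.pderiv_pderiv_comm (i j : σ) (p : MvPolynomial σ R) :
    pderiv i (pderiv j p) = pderiv j (pderiv i p) := by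
  have h : ⁅pderiv i, pderiv j⁆ = (0 : Derivation R (MvPolynomial σ R) (MvPolynomial σ R)) :=
    derivation_ext fun l => by
      rw [Derivation.commutator_apply]
      simp [pderiv_X, Pi.single_apply, apply_ite]
  have := congr($h p)
  rwa [Derivation.commutator_apply, Derivation.zero_apply, sub_eq_zero] at this

theorem commute_pderiv (i j : σ) :
    Commute (pderiv i).toLinearMap ((pderiv j).toLinearMap : Module.End R (MvPolynomial σ R)) :=
  LinearMap.ext fun p => pderiv_pderiv_comm i j p

theorem commute_mulLeft_of_derivation_eq_zero {A : Type*} [CommRing A] [Algebra R A]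
    (D : Derivation R A A) {r : A} (hr : D r = 0) :
    Commute (LinearMap.mulLeft R r) (D : Module.End R A) :=
  LinearMap.ext fun p => by simp [hr]

theorem pderiv_aeval_eq_mul {τ : Type*} [DecidableEq τ] (u : σ → MvPolynomial τ R) (i : σ)
    (j : τ) (c : MvPolynomial τ R) (hu : ∀ w, pderiv j (u w) = if w = i then c else 0)
    (p : MvPolynomial σ R) :
    pderiv j (aeval u p) = c * aeval u (pderiv i p) := by
  induction p using MvPolynomial.induction_on with
  | C a => simp
  | add p q hp hq => simp only [map_add, hp, hq, mul_add]
  | mul_X p w hp =>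
    simp only [map_mul, aeval_X, Derivation.leibniz, hp, hu, pderiv_X, smul_eq_mul, map_add,
      Pi.single_apply]
    split_ifs <;> simp [*] <;> ring

theorem commute_tOp (i j : Option σ) : Commute (tOp (k := R) i) (tOp j) := by
  have h : ∀ v : σ, Commute (tOp (k := R) none) (tOp (some v)) := fun v =>
    commute_mulLeft_of_derivation_eq_zero _ (pderiv_X_of_ne (Option.some_ne_none v).symm)
  rcases i with _ | v <;> rcases j with _ | w
  · exact .refl _
  · exact h w
  · exact (h v).symm
  · exact commute_pderiv _ _

end Derivations

section Actions

variable (R : Type*) [CommRing R] (σ : Type*) [DecidableEq σ]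

noncomputable def contractAlgHom : MvPolynomial σ R →ₐ[R] Module.End R (MvPolynomial σ R) :=
  opAlgHom (fun i => (pderiv i).toLinearMap) commute_pderiv

noncomputable def tActAlgHom :
    MvPolynomial (Option σ) R →ₐ[R] Module.End R (MvPolynomial (Option σ) R) :=
  opAlgHom tOp commute_tOp

variable {R σ}

theorem apContract_eq_contractAlgHom (h F : MvPolynomial σ R) :
    apContract h F = contractAlgHom R σ h F :=
  apAct_eq_opAlgHom _ _ h F

theorem tAct_eq_tActAlgHom (h F : MvPolynomial (Option σ) R) :
    tAct h F = tActAlgHom R σ h F :=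
  apAct_eq_opAlgHom _ _ h F

@[simp]
theorem contractAlgHom_X (i : σ) : contractAlgHom R σ (X i) = (pderiv i).toLinearMap :=
  opAlgHom_X _ _ i

@[simp]
theorem tActAlgHom_X (i : Option σ) : tActAlgHom R σ (X i) = tOp i :=
  opAlgHom_X _ _ i

end Actions

section Shift

variable (R : Type*) [CommRing R] {ι : Type*}

/-- `F(t, y) ↦ F(t, t • x + y)`. -/
noncomputable def shiftHom : MvPolynomial (Option ι) R →ₐ[R] MvPolynomial (Option (ι ⊕ ι)) R :=
  aeval fun w => w.elim (X none) fun i => X none * X (some (.inl i)) + X (some (.inr i))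

/-- On shifted polynomials `αᵢ` acts as `t βᵢ` does (`tOp_comp_shiftHom`). -/
noncomputable def substAlpha : MvPolynomial (Option (ι ⊕ ι)) R →ₐ[R] MvPolynomial (Option ι) R :=
  aeval fun w => w.elim (X none) (Sum.elim (fun i => X none * X (some i)) fun i => X (some i))

variable {R}

theorem shiftHom_rename_some (F : MvPolynomial ι R) :
    shiftHom R (rename some F) =
      aeval (fun i => X none * X (some (.inl i)) + X (some (.inr i))) F := by
  rw [shiftHom, aeval_rename]
  rfl

theorem shiftHom_injective : Function.Injective (shiftHom R (ι := ι)) := by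
  let setXZero : MvPolynomial (Option (ι ⊕ ι)) R →ₐ[R] MvPolynomial (Option ι) R :=
    aeval fun w => w.elim (X none) (Sum.elim 0 fun i => X (some i))
  have h : setXZero.comp (shiftHom R) = AlgHom.id R _ :=
    algHom_ext fun w => by cases w <;> simp [setXZero, shiftHom]
  exact Function.LeftInverse.injective (g := setXZero) (AlgHom.congr_fun h)

theorem substAlpha_surjective : Function.Surjective (substAlpha R (ι := ι)) := by
  have h : (substAlpha R).comp (rename (Option.map Sum.inr)) =
      AlgHom.id R (MvPolynomial (Option ι) R) :=
    algHom_ext fun w => by cases w <;> simp [substAlpha]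
  exact Function.RightInverse.surjective (AlgHom.congr_fun h)

variable [DecidableEq ι]

theorem tOp_comp_shiftHom (v : Option (ι ⊕ ι)) :
    tOp v ∘ₗ (shiftHom R).toLinearMap =
      (shiftHom R).toLinearMap ∘ₗ tActAlgHom R _ (substAlpha R (X v)) := by
  refine LinearMap.ext fun q => ?_
  rcases v with _ | i | i
  · simp [tOp, substAlpha, shiftHom]
  · have hu : ∀ w : Option ι, pderiv (some (.inl i))
        (w.elim (X none) fun j => X none * X (some (.inl j)) + X (some (.inr j)) :
          MvPolynomial (Option (ι ⊕ ι)) R) = if w = some i then X none else 0 := by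
      rintro (_ | j) <;> simp [pderiv_X, Pi.single_apply]
    change pderiv _ (aeval _ q) = aeval _ _
    rw [pderiv_aeval_eq_mul _ _ _ _ hu]
    simp [tOp, substAlpha]
  · have hu : ∀ w : Option ι, pderiv (some (.inr i))
        (w.elim (X none) fun j => X none * X (some (.inl j)) + X (some (.inr j)) :
          MvPolynomial (Option (ι ⊕ ι)) R) = if w = some i then 1 else 0 := by
      rintro (_ | j) <;> simp [pderiv_X, Pi.single_apply]
    change pderiv _ (aeval _ q) = aeval _ _
    rw [pderiv_aeval_eq_mul _ _ _ _ hu]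
    simp [tOp, substAlpha]

theorem tActAlgHom_shiftHom (h : MvPolynomial (Option (ι ⊕ ι)) R)
    (q : MvPolynomial (Option ι) R) :
    tActAlgHom R _ h (shiftHom R q) = shiftHom R (tActAlgHom R _ (substAlpha R h) q) :=
  LinearMap.congr_fun (algHom_comp_eq_comp_algHom_of_X (φ := tActAlgHom R _)
    (ψ := (tActAlgHom R _).comp (substAlpha R)) (f := (shiftHom R).toLinearMap)
    (fun v => by simpa using tOp_comp_shiftHom v) h) q

end Shift

section OptionEquivLeft

variable {R : Type*} [CommSemiring R] {ι : Type*}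

theorem optionEquivLeft_rename_some (p : MvPolynomial ι R) :
    optionEquivLeft R ι (rename some p) = Polynomial.C p := by
  rw [← AlgEquiv.eq_symm_apply, optionEquivLeft_symm_apply, Polynomial.aevalTower_C]

theorem optionEquivLeft_symm_monomial (d : ℕ) (r : MvPolynomial ι R) :
    (optionEquivLeft R ι).symm (Polynomial.monomial d r) = X none ^ d * rename some r := by
  rw [← Polynomial.C_mul_X_pow_eq_monomial, optionEquivLeft_symm_apply, map_mul, map_pow,
    Polynomial.aevalTower_C, Polynomial.aevalTower_X, mul_comm]

end OptionEquivLeft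

section Coefficients

variable {R : Type*} [CommRing R] {ι : Type*} [DecidableEq ι]

theorem tActAlgHom_rename_some (r F : MvPolynomial ι R) :
    tActAlgHom R ι (rename some r) (rename some F) = rename some (contractAlgHom R ι r F) :=
  LinearMap.congr_fun (algHom_comp_eq_comp_algHom_of_X
    (φ := (tActAlgHom R ι).comp (rename some)) (f := (rename some).toLinearMap)
    (fun i => LinearMap.ext fun p => by
      simpa [tOp] using pderiv_rename (Option.some_injective ι) i p) r) F

theorem coeff_optionEquivLeft_tActAlgHom (q : MvPolynomial (Option ι) R)
    (F : MvPolynomial ι R) (e : ℕ) :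
    (optionEquivLeft R ι (tActAlgHom R ι q (rename some F))).coeff e =
      contractAlgHom R ι ((optionEquivLeft R ι q).coeff e) F := by
  obtain ⟨p, rfl⟩ := (optionEquivLeft R ι).symm.surjective q
  rw [AlgEquiv.apply_symm_apply]
  induction p using Polynomial.induction_on' with
  | add p q hp hq => simp only [map_add, LinearMap.add_apply, Polynomial.coeff_add, hp, hq]
  | monomial d r =>
    have ht : ∀ z, tActAlgHom R ι (X none ^ d) z = X none ^ d * z := fun z => by
      simp [tOp, LinearMap.pow_mulLeft]
    rw [optionEquivLeft_symm_monomial, map_mul, Module.End.mul_apply, ht,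
      tActAlgHom_rename_some, map_mul, map_pow, optionEquivLeft_X_none,
      optionEquivLeft_rename_some, mul_comm, Polynomial.C_mul_X_pow_eq_monomial,
      Polynomial.coeff_monomial, Polynomial.coeff_monomial]
    split_ifs <;> simp

end Coefficients

section Kernel

variable {R : Type*} [CommRing R] {ι : Type*}

noncomputable def coeffQuotHom (K : Ideal (MvPolynomial ι R)) :
    MvPolynomial (Option ι) R →ₐ[R] Polynomial (MvPolynomial ι R ⧸ K) :=
  (Polynomial.mapAlgHom (Ideal.Quotient.mkₐ R K)).comp (optionEquivLeft R ι).toAlgHom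

theorem coeffQuotHom_eq_zero_iff (K : Ideal (MvPolynomial ι R)) (q : MvPolynomial (Option ι) R) :
    coeffQuotHom K q = 0 ↔ ∀ e, (optionEquivLeft R ι q).coeff e ∈ K := by
  simp [coeffQuotHom, Polynomial.ext_iff, Ideal.Quotient.eq_zero_iff_mem]

theorem coeffQuotHom_surjective (K : Ideal (MvPolynomial ι R)) :
    Function.Surjective (coeffQuotHom K) :=
  (Polynomial.map_surjective _ Ideal.Quotient.mk_surjective).comp (optionEquivLeft R ι).surjective

variable [DecidableEq ι]

theorem tAct_shift_eq_zero_iff (F : MvPolynomial ι R) (h : MvPolynomial (Option (ι ⊕ ι)) R) :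
    tAct h (aeval (fun i => X none * X (some (.inl i)) + X (some (.inr i))) F) = 0 ↔
      coeffQuotHom (Ideal.span {g | apContract g F = 0}) (substAlpha R h) = 0 := by
  rw [← shiftHom_rename_some, tAct_eq_tActAlgHom, tActAlgHom_shiftHom,
    map_eq_zero_iff _ shiftHom_injective, coeffQuotHom_eq_zero_iff,
    ← EmbeddingLike.map_eq_zero_iff (f := optionEquivLeft R ι), Polynomial.ext_iff]
  simp only [coeff_optionEquivLeft_tActAlgHom, Polynomial.coeff_zero,
    apContract_eq_contractAlgHom, mem_span_setOf_apply_eq_zero]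

theorem span_setOf_tAct_shift_eq_zero_eq_ker (F : MvPolynomial ι R) :
    Ideal.span
        {h | tAct h (aeval (fun i => X none * X (some (.inl i)) + X (some (.inr i))) F) = 0} =
      RingHom.ker ((coeffQuotHom (Ideal.span {g | apContract g F = 0})).comp (substAlpha R)) := by
  rw [← Ideal.span_eq (RingHom.ker _)]
  exact congrArg Ideal.span (Set.ext (tAct_shift_eq_zero_iff F))

end Kernel

theorem AlgHom.apply_aeval_eq_tmul_one {R A Q : Type*} [CommSemiring R] [Semiring A]
    [Algebra R A] [Semiring Q] [Algebra R Q] (f : A →ₐ[R] Polynomial R ⊗[R] Q) {a : A}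
    (ha : f a = Polynomial.X ⊗ₜ 1) (p : Polynomial R) :
    f (Polynomial.aeval a p) = p ⊗ₜ 1 := by
  rw [← Polynomial.aeval_algHom_apply, ha, ← Algebra.TensorProduct.includeLeft_apply (S := R),
    Polynomial.aeval_algHom_apply, Polynomial.aeval_X_left_apply,
    Algebra.TensorProduct.includeLeft_apply]

theorem AlgEquiv.free_and_nonempty_algEquiv_of_apply_eq_X_tmul_one {K A Q : Type*} [Field K]
    [CommRing A] [Algebra K A] [Ring Q] [Algebra K Q] (e : A ≃ₐ[K] Polynomial K ⊗[K] Q) {a : A}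
    (ha : e a = Polynomial.X ⊗ₜ 1) :
    letI := (Polynomial.aeval (R := K) a).toRingHom.toAlgebra
    Module.Free (Polynomial K) A ∧ Nonempty (A ≃ₐ[Polynomial K] Polynomial K ⊗[K] Q) := by
  let _ : Algebra (Polynomial K) A := (Polynomial.aeval a).toRingHom.toAlgebra
  let e' : A ≃ₐ[Polynomial K] Polynomial K ⊗[K] Q :=
    AlgEquiv.ofRingEquiv (f := e.toRingEquiv) (e.toAlgHom.apply_aeval_eq_tmul_one ha)
  exact ⟨Module.Free.of_equiv e'.symm.toLinearEquiv, ⟨e'⟩⟩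

theorem quotient_by_perp_shifted_free_general {k : Type*} [Field k] {n : ℕ}
    (F : MvPolynomial (Fin n) k) :
    letI B := MvPolynomial (Option (Fin n ⊕ Fin n)) k
    letI G : B := aeval (fun i : Fin n =>
      (X none * X (some (Sum.inl i)) + X (some (Sum.inr i)) : B)) F
    letI J : Ideal B := Ideal.span {h : B | tAct h G = 0}
    letI : Algebra (Polynomial k) (B ⧸ J) :=
      (Polynomial.aeval (Ideal.Quotient.mk J (X none))).toRingHom.toAlgebra
    letI Kβ : Ideal (MvPolynomial (Fin n) k) :=
      Ideal.span {h : MvPolynomial (Fin n) k | apContract h F = 0}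
    Module.Free (Polynomial k) (B ⧸ J)
      ∧ Nonempty ((B ⧸ J) ≃ₐ[Polynomial k]
          TensorProduct k (Polynomial k) (MvPolynomial (Fin n) k ⧸ Kβ)) := by
  rw [span_setOf_tAct_shift_eq_zero_eq_ker]
  set Kβ := Ideal.span {h : MvPolynomial (Fin n) k | apContract h F = 0}
  have hΨ : Function.Surjective ((coeffQuotHom Kβ).comp (substAlpha k)) :=
    (coeffQuotHom_surjective Kβ).comp (substAlpha_surjective (R := k) (ι := Fin n))
  let e : _ ≃ₐ[k] Polynomial k ⊗[k] (MvPolynomial (Fin n) k ⧸ Kβ) :=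
    (Ideal.quotientKerAlgEquivOfSurjective hΨ).trans
      ((polyEquivTensor k _).trans (Algebra.TensorProduct.comm k _ _))
  have he : e (Ideal.Quotient.mk _ (X none)) = Polynomial.X ⊗ₜ 1 := by
    rw [AlgEquiv.trans_apply, Ideal.quotientKerAlgEquivOfSurjective_mk, AlgEquiv.trans_apply]
    simp [coeffQuotHom, substAlpha]
  exact e.free_and_nonempty_algEquiv_of_apply_eq_X_tmul_one he

/-- The algebra `k[t,α,β]/F(t·x+y)^⊥` is a free module over `k[t]` (acting through the image
of `t`), being isomorphic to `k[t] ⊗_k (k[β]/F(y)^⊥)`. Notation as before: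
`k[t,α,β] = k[t,x,y] = MvPolynomial (Option (Fin n ⊕ Fin n)) k`, `t = X none`,
`α_i = x_i = X (some (Sum.inl i))`, `β_i = y_i = X (some (Sum.inr i))`, annihilators taken
for the relative apolarity action, and `k[β] = MvPolynomial (Fin n) k`. -/
theorem quotient_by_perp_shifted_free {k : Type*} [Field k] [CharZero k] {n : ℕ}
    (F : MvPolynomial (Fin n) k) (hF : F.IsHomogeneous 3) :
    letI B := MvPolynomial (Option (Fin n ⊕ Fin n)) k
    letI G : B := aeval (fun i : Fin n =>
      (X none * X (some (Sum.inl i)) + X (some (Sum.inr i)) : B)) F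
    letI J : Ideal B := Ideal.span {h : B | tAct h G = 0}
    letI : Algebra (Polynomial k) (B ⧸ J) :=
      (Polynomial.aeval (Ideal.Quotient.mk J (X none))).toRingHom.toAlgebra
    letI Kβ : Ideal (MvPolynomial (Fin n) k) :=
      Ideal.span {h : MvPolynomial (Fin n) k | apContract h F = 0}
    Module.Free (Polynomial k) (B ⧸ J)
      ∧ Nonempty ((B ⧸ J) ≃ₐ[Polynomial k]
          TensorProduct k (Polynomial k) (MvPolynomial (Fin n) k ⧸ Kβ)) :=
  quotient_by_perp_shifted_free_general F
end
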